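/- Let β ∈ Δ_lg, α ∈ −Δ_lg and γ ∈ Φ⁺. Then β →_γ α holds if and only if either (i) α = −β and γ = β, in which case ⟨β,γ∨⟩ = 2, or (ii) β + (−α) is a root and γ = β + (−α), in which case ⟨β,γ∨⟩ = 1. -/

import Mathlib

/-!
Put `n = ⟨β, γ∨⟩ ∈ ℤ`, so that `β + (-α) = β - s_γ β = n γ`. The left side has coordinates
`1` at the simple roots `β` and `-α` (`2` at `β` if they coincide) and `0` elsewhere, while those
of `γ` are nonnegative integers. If `β ≠ -α` this forces `n = 1` and `γ = β + (-α)`; if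
`β = -α` then `2β = nγ` with `n > 0`, and reducedness gives `n = 2`, `γ = β`. The level condition
holds automatically, since `ht∨` is `1` on `Δ` and `-1` on `-Δ`.
-/

open scoped RealInnerProductSpace Classical

noncomputable section

variable {V : Type} [NormedAddCommGroup V] [InnerProductSpace ℝ V] [FiniteDimensional ℝ V]

/-- The orthogonal reflection of `V` in the hyperplane orthogonal to `α`
(the reflection `s_α` when `α` is a root). -/
def sref (α : V) : V ≃ₗᵢ[ℝ] V := Submodule.reflection (Submodule.span ℝ {α})ᗮ

/-- The pairing `⟨β, γ∨⟩ = 2(β|γ)/(γ|γ)` of a vector with the coroot of `γ`. -/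
def cpair (β γ : V) : ℝ := 2 * ⟪β, γ⟫ / ⟪γ, γ⟫

/-- An irreducible reduced (crystallographic) root system in the real inner product
space `V`, the inner product being invariant under the Weyl group (automatic, since
reflections are isometries), normalized so that the shortest roots have squared length `1`. -/
structure NRootSystem (V : Type) [NormedAddCommGroup V] [InnerProductSpace ℝ V]
    [FiniteDimensional ℝ V] where
  Φ : Finset V
  nonempty : Φ.Nonempty
  zero_not_mem : (0 : V) ∉ Φ
  span_eq_top : Submodule.span ℝ (Φ : Set V) = ⊤
  reduced : ∀ α ∈ Φ, ∀ t : ℝ, t • α ∈ Φ → t = 1 ∨ t = -1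
  pairing_int : ∀ α ∈ Φ, ∀ β ∈ Φ, ∃ n : ℤ, 2 * ⟪β, α⟫ = n * ⟪α, α⟫
  reflect_mem : ∀ α ∈ Φ, ∀ β ∈ Φ, sref α β ∈ Φ
  irreducible : ∀ S : Finset V, S ⊆ Φ → S.Nonempty → (Φ \ S).Nonempty →
    ∃ α ∈ S, ∃ β ∈ Φ \ S, ⟪α, β⟫ ≠ 0
  norm_one_le : ∀ α ∈ Φ, 1 ≤ ⟪α, α⟫
  exists_norm_one : ∃ α ∈ Φ, ⟪α, α⟫ = 1

namespace NRootSystem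

variable (R : NRootSystem V)

/-- `r`, the maximal squared length of a root. -/
def r : ℝ := R.Φ.sup' R.nonempty fun α => ⟪α, α⟫

/-- long roots -/
def IsLong (α : V) : Prop := α ∈ R.Φ ∧ ⟪α, α⟫ = R.r

/-- short roots -/
def IsShort (α : V) : Prop := α ∈ R.Φ ∧ ⟪α, α⟫ < R.r

/-- The Weyl group `W`, generated by the reflections in the roots. -/
def Weyl : Subgroup (V ≃ₗᵢ[ℝ] V) := Subgroup.closure (sref '' (R.Φ : Set V))

end NRootSystem

/-- The standard parabolic subgroup `W_I` generated by the reflections in `I ⊆ Δ`. -/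
def WeylP (I : Finset V) : Subgroup (V ≃ₗᵢ[ℝ] V) := Subgroup.closure (sref '' (I : Set V))

/-- A base (set of simple roots) `Δ` of the root system, together with the
integral coordinates `coeff γ α` of each root `γ` in the basis `Δ`; every root is a
nonnegative or a nonpositive integral combination of the simple roots. -/
structure Base {V : Type} [NormedAddCommGroup V] [InnerProductSpace ℝ V]
    [FiniteDimensional ℝ V] (R : NRootSystem V) where
  Δ : Finset V
  subset : Δ ⊆ R.Φ
  indep : LinearIndependent ℝ (fun a : {x : V // x ∈ Δ} => (a : V))
  coeff : V → V → ℤ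
  coeff_spec : ∀ γ ∈ R.Φ, γ = ∑ α ∈ Δ, (coeff γ α : ℝ) • α
  coeff_sign : ∀ γ ∈ R.Φ, (∀ α ∈ Δ, 0 ≤ coeff γ α) ∨ (∀ α ∈ Δ, coeff γ α ≤ 0)

namespace Base

variable {R : NRootSystem V} (B : Base R)

/-- positive roots -/
def IsPos (γ : V) : Prop := γ ∈ R.Φ ∧ ∀ α ∈ B.Δ, 0 ≤ B.coeff γ α

/-- negative roots -/
def IsNeg (γ : V) : Prop := γ ∈ R.Φ ∧ ∀ α ∈ B.Δ, B.coeff γ α ≤ 0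

/-- the height of a root -/
def ht (γ : V) : ℤ := ∑ α ∈ B.Δ, B.coeff γ α

/-- the dual height `ht∨ γ = ht (γ∨)`: the height of the coroot `γ∨ = 2γ/(γ|γ)`
with respect to the basis of simple coroots `α∨ = 2α/(α|α)`, `α ∈ Δ`. -/
def htv (γ : V) : ℝ := ∑ α ∈ B.Δ, (B.coeff γ α : ℝ) * ⟪α, α⟫ / ⟪γ, γ⟫

/-- The length of `w`: the minimal length of an expression of `w` as a product of
simple reflections. -/
def len (w : V ≃ₗᵢ[ℝ] V) : ℕ :=
  sInf {n | ∃ g : Fin n → V, (∀ i, g i ∈ B.Δ) ∧ w = (List.ofFn fun i => sref (g i)).prod}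

/-- `w` is the longest element of the subgroup `H`. -/
def IsLongest (H : Subgroup (V ≃ₗᵢ[ℝ] V)) (w : V ≃ₗᵢ[ℝ] V) : Prop :=
  w ∈ H ∧ ∀ u ∈ H, B.len u ≤ B.len w

/-- `X_I = {w ∈ W | w(Φ_I⁺) ⊆ Φ⁺}`, the set of minimal length coset
representatives of `W/W_I`. -/
def XI (I : Finset V) : Set (V ≃ₗᵢ[ℝ] V) :=
  {w | w ∈ R.Weyl ∧
    ∀ γ, γ ∈ R.Φ → γ ∈ Submodule.span ℝ (I : Set V) → B.IsPos γ → B.IsPos (w γ)}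

/-- `h` is the highest root. -/
def IsHighest (h : V) : Prop :=
  h ∈ R.Φ ∧ ∀ γ ∈ R.Φ, ∀ α ∈ B.Δ, B.coeff γ α ≤ B.coeff h α

/-- `Ĩ = {α ∈ Δ | (h|α) = 0}`, the simple roots orthogonal to the highest root `h`. -/
def Itil (h : V) : Finset V := B.Δ.filter fun α => ⟪h, α⟫ = 0

/-- The level `L(α)` of a long root `α`, where `h` is the highest root:
`L(α) = ht∨(h) − ht∨(α)` if `α > 0` and `L(α) = ht∨(h) − ht∨(α) − 1` if `α < 0`. -/
def level (h α : V) : ℝ :=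
  if B.IsPos α then B.htv h - B.htv α else B.htv h - B.htv α - 1

/-- The elementary step relation `β →_γ α` on long roots (`γ` a positive root):
`α = s_γ(β)` and `L(α) = L(β) + 1`. -/
def Step (h γ β α : V) : Prop :=
  R.IsLong β ∧ R.IsLong α ∧ B.IsPos γ ∧ α = sref γ β ∧
    B.level h α = B.level h β + 1

/-- `g` is the sequence of positive roots of a path
`β = β₀ →_{g 0} β₁ →_{g 1} ⋯ →_{g (n-1)} β_n = α` from `β` to `α`. -/
def IsPathWord (h : V) {n : ℕ} (g : Fin n → V) (β α : V) : Prop :=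
  ∃ c : Fin (n + 1) → V, c 0 = β ∧ c (Fin.last n) = α ∧
    ∀ i : Fin n, B.Step h (g i) (c i.castSucc) (c i.succ)

/-- a path all of whose steps use simple roots -/
def IsSimplePathWord (h : V) {n : ℕ} (g : Fin n → V) (β α : V) : Prop :=
  B.IsPathWord h g β α ∧ ∀ i, g i ∈ B.Δ

/-- there is a path from `β` to `α`, i.e. `α ⪯ β` -/
def HasPath (h β α : V) : Prop := ∃ (n : ℕ) (g : Fin n → V), B.IsPathWord h g β α

/-- there is a simple path from `β` to `α` -/
def HasSimplePath (h β α : V) : Prop :=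
  ∃ (n : ℕ) (g : Fin n → V), B.IsSimplePathWord h g β α

/-- The covering relation `w →_γ w'` for the Bruhat order:
`w' = s_γ w` and `l(w') = l(w) + 1`, for a positive root `γ`. -/
def BStep (γ : V) (w w' : V ≃ₗᵢ[ℝ] V) : Prop :=
  B.IsPos γ ∧ w' = sref γ * w ∧ B.len w' = B.len w + 1

/-- The Bruhat order on `W`: the reflexive–transitive closure of the covering
relations. -/
def bruhatLE : (V ≃ₗᵢ[ℝ] V) → (V ≃ₗᵢ[ℝ] V) → Prop :=
  Relation.ReflTransGen fun w w' => ∃ γ, B.BStep γ w w'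

/-- `x` is an element of `W` with `x(β) = α` of the minimal possible length
`|L(α) − L(β)|` (this is the element `x_{αβ}` when it exists). -/
def MinTake (h β α : V) (x : V ≃ₗᵢ[ℝ] V) : Prop :=
  x ∈ R.Weyl ∧ x β = α ∧ (B.len x : ℝ) = |B.level h α - B.level h β|

/-- `g` is a reduced expression of `x` as a product of simple reflections. -/
def IsReducedWord {n : ℕ} (g : Fin n → V) (x : V ≃ₗᵢ[ℝ] V) : Prop :=
  (∀ i, g i ∈ B.Δ) ∧ x = (List.ofFn fun i => sref (g i)).prod ∧ n = B.len x

/-- The depth of a positive root `β`: the minimal integer `k` such that there is an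
element `w` of `W` of length `k` with `w(β) < 0`. -/
def depth (β : V) : ℕ := sInf {n | ∃ w ∈ R.Weyl, B.len w = n ∧ B.IsNeg (w β)}

end Base

lemma sref_apply {E : Type} [NormedAddCommGroup E] [InnerProductSpace ℝ E] (γ v : E) :
    sref γ v = v - cpair v γ • γ := by
  rw [sref, Submodule.reflection_orthogonal_apply, Submodule.reflection_singleton_apply,
    cpair, real_inner_self_eq_norm_sq]
  simp only [RCLike.ofReal_real_eq_id, id, real_inner_comm]
  module

lemma sref_self {E : Type} [NormedAddCommGroup E] [InnerProductSpace ℝ E] (γ : E) :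
    sref γ γ = -γ :=
  Submodule.reflection_orthogonalComplement_singleton_eq_neg γ

namespace NRootSystem

variable (R : NRootSystem V)

lemma inner_self_ne_zero {α : V} (hα : α ∈ R.Φ) : ⟪α, α⟫ ≠ 0 := by
  have := R.norm_one_le α hα
  positivity

lemma exists_int_cpair_eq {α β : V} (hα : α ∈ R.Φ) (hβ : β ∈ R.Φ) :
    ∃ n : ℤ, cpair β α = n := by
  obtain ⟨n, hn⟩ := R.pairing_int α hα β hβ
  exact ⟨n, by rw [cpair, hn, mul_div_cancel_right₀ _ (R.inner_self_ne_zero hα)]⟩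

lemma eq_two_and_eq_of_two_smul_eq_smul {β γ : V} (hβ : β ∈ R.Φ) (hγ : γ ∈ R.Φ) {n : ℝ}
    (hn : 0 < n) (hβγ : (2 : ℝ) • β = n • γ) : n = 2 ∧ γ = β := by
  have hmem : (n / 2) • γ ∈ R.Φ := by
    rwa [div_eq_inv_mul, mul_smul, ← hβγ, inv_smul_smul₀ two_ne_zero]
  have hn2 : n = 2 := by
    rcases R.reduced γ hγ (n / 2) hmem with h | h <;> linarith
  refine ⟨hn2, smul_right_injective V (two_ne_zero' ℝ) ?_⟩
  simp only [hβγ, hn2]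

end NRootSystem

namespace Base

variable {R : NRootSystem V} (B : Base R)

lemma eq_of_sum_smul_eq {c d : V → ℝ}
    (hcd : ∑ δ ∈ B.Δ, c δ • δ = ∑ δ ∈ B.Δ, d δ • δ) : ∀ δ ∈ B.Δ, c δ = d δ := by
  have h0 : ∑ i : B.Δ, (c i - d i) • (i : V) = 0 := by
    rw [Finset.sum_coe_sort B.Δ fun δ => (c δ - d δ) • δ]
    simp only [sub_smul, Finset.sum_sub_distrib, hcd, sub_self]
  intro δ hδ
  exact sub_eq_zero.mp (Fintype.linearIndependent_iff.mp B.indep _ h0 ⟨δ, hδ⟩)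

lemma coeff_eq_of_eq_sum_smul {γ : V} (hγ : γ ∈ R.Φ) {c : V → ℝ}
    (hc : γ = ∑ δ ∈ B.Δ, c δ • δ) : ∀ δ ∈ B.Δ, (B.coeff γ δ : ℝ) = c δ :=
  B.eq_of_sum_smul_eq ((B.coeff_spec γ hγ).symm.trans hc)

lemma coeff_smul_of_mem {β : V} (hβ : β ∈ B.Δ) {t : ℝ} (ht : t • β ∈ R.Φ) :
    ∀ δ ∈ B.Δ, (B.coeff (t • β) δ : ℝ) = if δ = β then t else 0 :=
  B.coeff_eq_of_eq_sum_smul ht (by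
    simp only [ite_smul, zero_smul]
    rw [Finset.sum_ite_eq' B.Δ β fun δ => t • δ, if_pos hβ])

lemma htv_smul_of_mem {β : V} (hβ : β ∈ B.Δ) {t : ℝ} (ht : t • β ∈ R.Φ) :
    B.htv (t • β) = t⁻¹ := by
  have hββ := R.inner_self_ne_zero (B.subset hβ)
  have ht0 : t ≠ 0 := by
    rintro rfl
    exact R.zero_not_mem (by rwa [zero_smul] at ht)
  rw [htv, Finset.sum_congr rfl fun δ hδ => by rw [B.coeff_smul_of_mem hβ ht δ hδ]]
  simp only [ite_mul, zero_mul, ite_div, zero_div]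
  rw [Finset.sum_ite_eq' B.Δ β, if_pos hβ, real_inner_smul_left, real_inner_smul_right]
  field_simp

lemma isPos_of_mem {β : V} (hβ : β ∈ B.Δ) : B.IsPos β := by
  have hβΦ := B.subset hβ
  refine ⟨hβΦ, fun δ hδ => ?_⟩
  have h := B.coeff_smul_of_mem hβ (t := 1) (by rwa [one_smul]) δ hδ
  rw [one_smul] at h
  have : (0 : ℝ) ≤ B.coeff β δ := by rw [h]; split_ifs <;> norm_num
  exact_mod_cast this

lemma not_isPos_of_neg_mem {α : V} (hα : -α ∈ B.Δ) (hαΦ : α ∈ R.Φ) : ¬ B.IsPos α := by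
  have hαΦ' : (-1 : ℝ) • -α ∈ R.Φ := by rwa [neg_one_smul, neg_neg]
  have h := B.coeff_smul_of_mem hα hαΦ' (-α) hα
  rw [if_pos rfl, neg_one_smul, neg_neg] at h
  have hneg : B.coeff α (-α) < 0 := by exact_mod_cast h.trans_lt neg_one_lt_zero
  exact fun hpos => (hpos.2 (-α) hα).not_gt hneg

lemma level_eq_level_add_one_of_mem_of_neg_mem (h : V) {β α : V} (hβ : β ∈ B.Δ)
    (hα : -α ∈ B.Δ) (hαΦ : α ∈ R.Φ) :
    B.level h α = B.level h β + 1 := by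
  have hβ1 : B.htv β = 1 := by
    simpa using B.htv_smul_of_mem hβ (t := 1) (by rw [one_smul]; exact B.subset hβ)
  have hα1 : B.htv α = -1 := by
    simpa using B.htv_smul_of_mem hα (t := -1) (by rwa [neg_one_smul, neg_neg])
  rw [level, level, if_pos (B.isPos_of_mem hβ), if_neg (B.not_isPos_of_neg_mem hα hαΦ),
    hβ1, hα1]
  ring

lemma mul_coeff_of_add_eq_smul {β β' γ : V} (hβ : β ∈ B.Δ) (hβ' : β' ∈ B.Δ) (hγ : γ ∈ R.Φ)
    {n : ℝ} (hsum : β + β' = n • γ) :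
    ∀ δ ∈ B.Δ, n * B.coeff γ δ = (if δ = β then 1 else 0) + (if δ = β' then 1 else 0) := by
  apply B.eq_of_sum_smul_eq
  simp only [mul_smul, ← Finset.smul_sum, ← B.coeff_spec γ hγ, ← hsum, add_smul,
    Finset.sum_add_distrib, ite_smul, one_smul, zero_smul]
  rw [Finset.sum_ite_eq' B.Δ β, Finset.sum_ite_eq' B.Δ β', if_pos hβ, if_pos hβ']

theorem eq_or_eq_add_of_sref_eq {β α γ : V} (hβ : β ∈ B.Δ) (hα : -α ∈ B.Δ)
    (hγ : B.IsPos γ) (hsref : sref γ β = α) :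
    (α = -β ∧ γ = β ∧ cpair β γ = 2) ∨ (γ = β + -α ∧ cpair β γ = 1) := by
  obtain ⟨n, hn⟩ := R.exists_int_cpair_eq hγ.1 (B.subset hβ)
  have hsum : β + -α = (n : ℝ) • γ := by
    rw [← hn, ← hsref, sref_apply]
    abel
  have hcoeff := B.mul_coeff_of_add_eq_smul hβ hα hγ.1 hsum β hβ
  have hk := hγ.2 β hβ
  by_cases hβα : β = -α
  · left
    rw [if_pos rfl, if_pos hβα, one_add_one_eq_two] at hcoeff
    have hcoeff' : n * B.coeff γ β = 2 := by exact_mod_cast hcoeff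
    have hn0 : (0 : ℝ) < n := by exact_mod_cast pos_of_mul_pos_left (by omega) hk
    rw [← hβα, ← two_smul ℝ] at hsum
    obtain ⟨hn2, hγβ⟩ := R.eq_two_and_eq_of_two_smul_eq_smul (B.subset hβ) hγ.1 hn0 hsum
    exact ⟨by rw [hβα, neg_neg], hγβ, by rw [hn, hn2]⟩
  · right
    rw [if_pos rfl, if_neg hβα, add_zero] at hcoeff
    have hcoeff' : n * B.coeff γ β = 1 := by exact_mod_cast hcoeff
    have hn1 : n = 1 := by
      simpa [Int.eq_one_of_mul_eq_one_left hk hcoeff'] using hcoeff'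
    rw [hn1, Int.cast_one, one_smul] at hsum
    exact ⟨hsum.symm, by rw [hn, hn1, Int.cast_one]⟩

end Base

theorem step_from_simple_to_neg_simple_general (R : NRootSystem V) (B : Base R) {h : V}
    {β α γ : V}
    (hβ : β ∈ B.Δ) (hβl : R.IsLong β) (hα : -α ∈ B.Δ) (hαl : R.IsLong α)
    (hγ : B.IsPos γ) :
    B.Step h γ β α ↔
      ((α = -β ∧ γ = β ∧ cpair β γ = 2) ∨
       (β + (-α) ∈ R.Φ ∧ γ = β + (-α) ∧ cpair β γ = 1)) := by
  constructor
  · rintro ⟨-, -, -, hsref, -⟩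
    refine (B.eq_or_eq_add_of_sref_eq hβ hα hγ hsref.symm).imp id fun hγβ => ?_
    exact ⟨hγβ.1 ▸ hγ.1, hγβ⟩
  · intro hcases
    refine ⟨hβl, hαl, hγ, ?_, B.level_eq_level_add_one_of_mem_of_neg_mem h hβ hα hαl.1⟩
    rcases hcases with ⟨hαβ, rfl, -⟩ | ⟨-, hγβ, hpair⟩
    · rw [hαβ, sref_self]
    · rw [sref_apply, hpair, one_smul, hγβ]
      abel

/-- let `β ∈ Δ_lg`, `α ∈ −Δ_lg` and `γ ∈ Φ⁺`. Then `β →_γ α` if and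
only if either (i) `α = −β` and `γ = β`, in which case `⟨β,γ∨⟩ = 2`, or
(ii) `β + (−α)` is a root and `γ = β + (−α)`, in which case `⟨β,γ∨⟩ = 1`. -/
theorem step_from_simple_to_neg_simple (R : NRootSystem V) (B : Base R) {h : V}
    (hh : B.IsHighest h) {β α γ : V}
    (hβ : β ∈ B.Δ) (hβl : R.IsLong β) (hα : -α ∈ B.Δ) (hαl : R.IsLong α)
    (hγ : B.IsPos γ) :
    B.Step h γ β α ↔
      ((α = -β ∧ γ = β ∧ cpair β γ = 2) ∨
       (β + (-α) ∈ R.Φ ∧ γ = β + (-α) ∧ cpair β γ = 1)) :=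
  step_from_simple_to_neg_simple_general R B hβ hβl hα hαl hγ
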